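/- For every integer m ≥ 1, the bivariate generating function of the m-th triangle of the first family satisfies (1 + xy + (xy)² + ⋯ + (xy)^{m−1})·(1 − x − xy) · G_m(x,y) = 1, where G_m(x,y) is the formal power series in two variables x, y over ℤ whose coefficient of x^n y^k is B_m(n,k) for 0 ≤ k ≤ n and 0 for k > n. -/

import Mathlib

/-!
Write `t = xy`. Pascal's recurrence makes `(1 - x - xy) G` collapse onto the diagonal: its
coefficient of `x^n y^k` vanishes for `n ≠ k`, and is `[m ∣ n] - [0 < n ∧ m ∣ n - 1]` for `n = k`.
Hence `(1 - x - xy) G = (1 - t) D` with `D = ∑_j t^(mj)`, and multiplying by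
`1 + t + ⋯ + t^(m-1)` turns `1 - t` into `1 - t^m`, the inverse of `D`.
-/

/-- The `m`-th Pascal-like triangle of the first family: `B m n 0 = 1`,
`B m n n = 1` if `m ∣ n` and `0` otherwise, and Pascal's recurrence
`B m n k = B m (n-1) k + B m (n-1) (k-1)` for `0 < k < n`.
(Values with `k > n` are set to `0`.) -/
def B (m : ℕ) : ℕ → ℕ → ℕ
  | _, 0 => 1
  | 0, _ + 1 => 0
  | n + 1, k + 1 =>
      if n + 1 = k + 1 then (if m ∣ (n + 1) then 1 else 0)
      else if n + 1 < k + 1 then 0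
      else B m n (k + 1) + B m n k

open MvPowerSeries Finsupp

namespace MvPowerSeries

variable {R : Type*}

def ofCoeffs (f : ℕ → ℕ → R) : MvPowerSeries (Fin 2) R := fun d => f (d 0) (d 1)

lemma coeff_ofCoeffs [Semiring R] (f : ℕ → ℕ → R) (d : Fin 2 →₀ ℕ) :
    coeff d (ofCoeffs f) = f (d 0) (d 1) := rfl

lemma eq_single_add_single (d : Fin 2 →₀ ℕ) : d = single 0 (d 0) + single 1 (d 1) := by
  ext i
  fin_cases i <;> simp

lemma eq_ofCoeffs [Semiring R] (F : MvPowerSeries (Fin 2) R) :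
    F = ofCoeffs fun n k => coeff (single 0 n + single 1 k) F := by
  ext d
  rw [coeff_ofCoeffs, ← eq_single_add_single]

lemma ofCoeffs_sub [Ring R] (f f' : ℕ → ℕ → R) :
    ofCoeffs f - ofCoeffs f' = ofCoeffs fun n k => f n k - f' n k := rfl

lemma one_eq_ofCoeffs [Semiring R] :
    (1 : MvPowerSeries (Fin 2) R) = ofCoeffs fun n k => if n = 0 ∧ k = 0 then 1 else 0 := by
  ext d
  rw [coeff_one, coeff_ofCoeffs]
  congr 1
  simp [Finsupp.ext_iff, Fin.forall_fin_two]

lemma monomial_mul_ofCoeffs [Semiring R] (a b : ℕ) (f : ℕ → ℕ → R) :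
    monomial (single 0 a + single 1 b) 1 * ofCoeffs f =
      ofCoeffs fun n k => if a ≤ n ∧ b ≤ k then f (n - a) (k - b) else 0 := by
  ext d
  simp [coeff_monomial_mul, coeff_ofCoeffs, Finsupp.le_def, Fin.forall_fin_two]

lemma X_zero_eq_monomial [Semiring R] :
    (X 0 : MvPowerSeries (Fin 2) R) = monomial (single 0 1 + single 1 0) 1 := by
  rw [single_zero, add_zero, X_def]

lemma X_zero_mul_X_one_pow [CommSemiring R] (i : ℕ) :
    (X 0 * X 1 : MvPowerSeries (Fin 2) R) ^ i = monomial (single 0 i + single 1 i) 1 := by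
  rw [mul_pow, X_pow_eq, X_pow_eq, monomial_mul_monomial, one_mul]

end MvPowerSeries

section Triangle

variable (m : ℕ)

lemma B_zero_left (k : ℕ) : B m 0 k = if k = 0 then 1 else 0 := by
  cases k <;> simp [B]

lemma B_eq_zero_of_lt {n k : ℕ} (h : n < k) : B m n k = 0 := by
  obtain ⟨k, rfl⟩ := Nat.exists_eq_add_of_lt h
  cases n <;> simp [B]; omega

lemma B_self (n : ℕ) : B m n n = if m ∣ n then 1 else 0 := by
  cases n <;> simp [B]

lemma B_succ_succ_sub (n k : ℕ) :
    (B m (n + 1) (k + 1) : ℤ) - B m n (k + 1) - B m n k =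
      (if n = k ∧ m ∣ n + 1 then 1 else 0) - (if n = k ∧ m ∣ n then 1 else 0) := by
  rcases lt_trichotomy n k with h | rfl | h
  · simp [B, B_eq_zero_of_lt m h, B_eq_zero_of_lt m (Nat.lt_succ_of_lt h), h.ne]
  · simp [B, B_self, B_eq_zero_of_lt m (Nat.lt_succ_self n)]
  · simp [B, h.ne', h.not_gt]

end Triangle

def triangleSeries (m : ℕ) : MvPowerSeries (Fin 2) ℤ :=
  ofCoeffs fun n k => (B m n k : ℤ)

def dvdDiag (m : ℕ) : MvPowerSeries (Fin 2) ℤ :=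
  ofCoeffs fun n k => if n = k ∧ m ∣ n then 1 else 0

lemma one_sub_X_sub_mul_triangleSeries (m : ℕ) :
    (1 - X 0 - X 0 * X 1) * triangleSeries m =
      (1 - X 0 * X 1) * dvdDiag m := by
  rw [triangleSeries, dvdDiag, sub_mul, sub_mul, sub_mul, one_mul, one_mul, ← pow_one (X 0 * X 1),
    X_zero_mul_X_one_pow, X_zero_eq_monomial, monomial_mul_ofCoeffs, monomial_mul_ofCoeffs,
    monomial_mul_ofCoeffs, ofCoeffs_sub, ofCoeffs_sub, ofCoeffs_sub]
  congr 1
  ext (_ | n) (_ | k)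
  · simp [B_zero_left]
  · simp [B_zero_left]
  · simp [B]
  · simpa using B_succ_succ_sub m n k

lemma one_sub_pow_mul_dvdDiag {m : ℕ} (hm : 1 ≤ m) :
    (1 - (X 0 * X 1) ^ m) * dvdDiag m = 1 := by
  rw [dvdDiag, sub_mul, one_mul, X_zero_mul_X_one_pow, monomial_mul_ofCoeffs, ofCoeffs_sub,
    one_eq_ofCoeffs]
  congr 1
  ext n k
  by_cases hnk : n = k
  · subst hnk
    rcases Nat.eq_zero_or_pos n with rfl | hn
    · simp; omega
    · by_cases hmn : m ≤ n
      · obtain ⟨j, rfl⟩ := Nat.exists_eq_add_of_le hmn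
        simp [hmn]
        omega
      · have : ¬ m ∣ n := fun h => hmn (Nat.le_of_dvd hn h)
        simp [hmn, this]
        omega
  · simp [hnk]
    omega

/-- The bivariate generating function `G` of the `m`-th triangle of the first
family satisfies `(1 + xy + ⋯ + (xy)^(m-1)) * (1 - x - xy) * G = 1`. -/
theorem stmt_7 (m : ℕ) (hm : 1 ≤ m) (G : MvPowerSeries (Fin 2) ℤ)
    (hG : ∀ n k : ℕ,
      MvPowerSeries.coeff (Finsupp.single 0 n + Finsupp.single 1 k) G
        = if k ≤ n then (B m n k : ℤ) else 0) :
    (∑ i ∈ Finset.range m, (MvPowerSeries.X 0 * MvPowerSeries.X 1) ^ i) *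
        (1 - MvPowerSeries.X 0 - MvPowerSeries.X 0 * MvPowerSeries.X 1) * G = 1 := by
  have hG' : G = triangleSeries m := by
    refine (eq_ofCoeffs G).trans (congrArg ofCoeffs (funext₂ fun n k => ?_))
    rw [hG, ite_eq_left_iff]
    exact fun h => by rw [B_eq_zero_of_lt m (not_le.mp h), Nat.cast_zero]
  rw [mul_assoc, hG', one_sub_X_sub_mul_triangleSeries, ← mul_assoc, geom_sum_mul_neg,
    one_sub_pow_mul_dvdDiag hm]
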